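/- arXiv:math/0410047 — 4 statements merged into one kernel-verified Lean document; each statement's English description precedes it below -/
import Mathlib

section
/- Let E be a set and φ, ψ : E × E → ℤ satisfy antisymmetry, the cocycle condition, and take values in {-1,0,1}. Suppose there is no pair (e,f) with φ(e,f) = 1 = ψ(e,f) and no pair (e,f) with φ(e,f) = 1 = -ψ(e,f). Then the joint equivalence relation (e ∼ f ⟺ φ(e,f) = 0 ∧ ψ(e,f) = 0) has at most three equivalence classes. -/
set_option maxHeartbeats 2000000


/-- If there is no pair with `φ = 1 = ψ` and no pair with `φ = 1 = -ψ`, then the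
joint equivalence relation has at most three classes: among any four elements,
some pair is equivalent. -/
theorem at_most_three_classes {E : Type*} (φ ψ : E × E → ℤ)
    (hantiφ : ∀ e f : E, φ (e, f) = -φ (f, e))
    (hcocφ : ∀ e f g : E, φ (e, g) = φ (e, f) + φ (f, g))
    (hvalφ : ∀ e f : E, φ (e, f) ∈ ({-1, 0, 1} : Set ℤ))
    (hantiψ : ∀ e f : E, ψ (e, f) = -ψ (f, e))
    (hcocψ : ∀ e f g : E, ψ (e, g) = ψ (e, f) + ψ (f, g))
    (hvalψ : ∀ e f : E, ψ (e, f) ∈ ({-1, 0, 1} : Set ℤ))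
    (h1 : ¬ ∃ e f : E, φ (e, f) = 1 ∧ ψ (e, f) = 1)
    (h2 : ¬ ∃ e f : E, φ (e, f) = 1 ∧ ψ (e, f) = -1) :
    ∀ a b c d : E,
      (φ (a, b) = 0 ∧ ψ (a, b) = 0) ∨ (φ (a, c) = 0 ∧ ψ (a, c) = 0) ∨
      (φ (a, d) = 0 ∧ ψ (a, d) = 0) ∨ (φ (b, c) = 0 ∧ ψ (b, c) = 0) ∨
      (φ (b, d) = 0 ∧ ψ (b, d) = 0) ∨ (φ (c, d) = 0 ∧ ψ (c, d) = 0) := by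
  push_neg at h1 h2
  have key : ∀ e f : E, φ (e, f) ≠ 0 → ψ (e, f) = 0 := by
    intro e f hne
    have hφ := hvalφ e f
    simp only [Set.mem_insert_iff, Set.mem_singleton_iff] at hφ
    rcases hφ with h | h | h
    · have h' : φ (f, e) = 1 := by rw [hantiφ f e, h]; ring
      have hψ := hvalψ f e
      simp only [Set.mem_insert_iff, Set.mem_singleton_iff] at hψ
      have := h1 f e h'
      have := h2 f e h'
      have := hantiψ e f
      rcases hψ with h'' | h'' | h'' <;> omega
    · exact absurd h hne
    · have hψ := hvalψ e f
      simp only [Set.mem_insert_iff, Set.mem_singleton_iff] at hψ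
      have := h1 e f h
      have := h2 e f h
      rcases hψ with h'' | h'' | h'' <;> omega
  intro a b c d
  have vφ : ∀ e f : E, -1 ≤ φ (e, f) ∧ φ (e, f) ≤ 1 := by
    intro e f
    have := hvalφ e f
    simp only [Set.mem_insert_iff, Set.mem_singleton_iff] at this
    omega
  have vψ : ∀ e f : E, -1 ≤ ψ (e, f) ∧ ψ (e, f) ≤ 1 := by
    intro e f
    have := hvalψ e f
    simp only [Set.mem_insert_iff, Set.mem_singleton_iff] at this
    omega
  have kab := key a b; have kac := key a c; have kad := key a d
  have kbc := key b c; have kbd := key b d; have kcd := key c d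
  have c1 := hcocφ a b c; have c2 := hcocφ a b d; have c3 := hcocφ b c d
  have d1 := hcocψ a b c; have d2 := hcocψ a b d; have d3 := hcocψ b c d
  have v1 := vφ a b; have v2 := vφ a c; have v3 := vφ a d
  have v4 := vφ b c; have v5 := vφ b d; have v6 := vφ c d
  have w1 := vψ a b; have w2 := vψ a c; have w3 := vψ a d
  have w4 := vψ b c; have w5 := vψ b d; have w6 := vψ c d
  omega
end

section
/- Let E be a set, fix e ∈ E, and let φ : E × E → ℤ satisfy antisymmetry and the cocycle condition with values in {-1,0,1}. Then either φ(e,f) ∈ {0,1} for all f ∈ E, or φ(e,f) ∈ {0,-1} for all f ∈ E. -/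
/-- Sign normalization: for a fixed `e`, either `φ (e, ·)` takes values in
`{0,1}` or it takes values in `{0,-1}`. -/
theorem sign_normalization {E : Type*} (φ : E × E → ℤ) (e : E)
    (hanti : ∀ e f : E, φ (e, f) = -φ (f, e))
    (hcoc : ∀ e f g : E, φ (e, g) = φ (e, f) + φ (f, g))
    (hval : ∀ e f : E, φ (e, f) ∈ ({-1, 0, 1} : Set ℤ)) :
    (∀ f : E, φ (e, f) = 0 ∨ φ (e, f) = 1) ∨
      (∀ f : E, φ (e, f) = 0 ∨ φ (e, f) = -1) := by
  by_cases h : ∃ f, φ (e, f) = 1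
  · left
    obtain ⟨f, hf⟩ := h
    intro g
    rcases hval e g with h1 | h1 | h1
    · exfalso
      have := hcoc f e g
      have hfe : φ (f, e) = -1 := by rw [hanti]; omega
      rw [hfe, h1] at this
      have h2 := hval f g
      simp only [Set.mem_insert_iff, Set.mem_singleton_iff] at h2
      omega
    · left; exact h1
    · right; exact h1
  · right
    intro g
    rcases hval e g with h1 | h1 | h1
    · right; exact h1
    · left; exact h1
    · exact absurd ⟨g, h1⟩ h
end

section
/- Let E be a set and φ, ψ : E × E → ℤ satisfy antisymmetry, the cocycle condition, and take values in {-1,0,1}, and suppose the joint equivalence relation (φ(e,f) = 0 ∧ ψ(e,f) = 0) has at most three equivalence classes. Let X₁ = {f : φ(e₀,f) ≤ 0}, X₂ = {f : φ(e₀,f) > 0} for some fixed e₀ with φ(e₀,·) ∈ {0,1}, and similarly Y₁, Y₂ for ψ. Then one of the four intersections Xᵢ ∩ Yⱼ is empty. -/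
/-- Remark 1 abstracted: if the joint equivalence relation has at most three
classes, then one of the four corner sets `Xᵢ ∩ Yⱼ` is empty. -/
theorem corner_empty {E : Type*} (φ ψ : E × E → ℤ)
    (hantiφ : ∀ e f : E, φ (e, f) = -φ (f, e))
    (hcocφ : ∀ e f g : E, φ (e, g) = φ (e, f) + φ (f, g))
    (hvalφ : ∀ e f : E, φ (e, f) ∈ ({-1, 0, 1} : Set ℤ))
    (hantiψ : ∀ e f : E, ψ (e, f) = -ψ (f, e))
    (hcocψ : ∀ e f g : E, ψ (e, g) = ψ (e, f) + ψ (f, g))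
    (hvalψ : ∀ e f : E, ψ (e, f) ∈ ({-1, 0, 1} : Set ℤ))
    (hthree : ∀ a b c d : E,
      (φ (a, b) = 0 ∧ ψ (a, b) = 0) ∨ (φ (a, c) = 0 ∧ ψ (a, c) = 0) ∨
      (φ (a, d) = 0 ∧ ψ (a, d) = 0) ∨ (φ (b, c) = 0 ∧ ψ (b, c) = 0) ∨
      (φ (b, d) = 0 ∧ ψ (b, d) = 0) ∨ (φ (c, d) = 0 ∧ ψ (c, d) = 0))
    (e₀ : E)
    (hφnorm : ∀ f : E, φ (e₀, f) = 0 ∨ φ (e₀, f) = 1)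
    (hψnorm : ∀ f : E, ψ (e₀, f) = 0 ∨ ψ (e₀, f) = 1) :
    ({f : E | φ (e₀, f) ≤ 0} ∩ {f : E | ψ (e₀, f) ≤ 0} = ∅) ∨
    ({f : E | φ (e₀, f) ≤ 0} ∩ {f : E | ψ (e₀, f) > 0} = ∅) ∨
    ({f : E | φ (e₀, f) > 0} ∩ {f : E | ψ (e₀, f) ≤ 0} = ∅) ∨
    ({f : E | φ (e₀, f) > 0} ∩ {f : E | ψ (e₀, f) > 0} = ∅) := by
  by_contra h
  push_neg at h
  obtain ⟨h1, h2, h3, h4⟩ := h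
  obtain ⟨b, hb1, hb2⟩ := h2
  obtain ⟨c, hc1, hc2⟩ := h3
  obtain ⟨d, hd1, hd2⟩ := h4
  simp only [Set.mem_setOf_eq] at hb1 hb2 hc1 hc2 hd1 hd2
  have pb : φ (e₀, b) = 0 := by rcases hφnorm b with h|h <;> omega
  have qb : ψ (e₀, b) = 1 := by rcases hψnorm b with h|h <;> omega
  have pc : φ (e₀, c) = 1 := by rcases hφnorm c with h|h <;> omega
  have qc : ψ (e₀, c) = 0 := by rcases hψnorm c with h|h <;> omega
  have pd : φ (e₀, d) = 1 := by rcases hφnorm d with h|h <;> omega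
  have qd : ψ (e₀, d) = 1 := by rcases hψnorm d with h|h <;> omega
  have hbc : φ (b, c) = 1 := by
    rw [hcocφ b e₀ c, hantiφ b e₀]; omega
  have hbd : φ (b, d) = 1 := by
    rw [hcocφ b e₀ d, hantiφ b e₀]; omega
  have hcd : ψ (c, d) = 1 := by
    rw [hcocψ c e₀ d, hantiψ c e₀]; omega
  rcases hthree e₀ b c d with ⟨_,h⟩|⟨h,_⟩|⟨h,_⟩|⟨h,_⟩|⟨h,_⟩|⟨_,h⟩ <;> omega
end

section
/- Let T be a locally finite tree with no terminal vertices, A a finitely supported antisymmetric ℤ-valued function on oriented edges of T, and τ a finite subtree containing the support of A. Then the following are equivalent: (1) for every bi-infinite proper edge path c in T, the sum c·A lies in {-1,0,1}; (2) for every finite edge path ξ in τ with endpoints on the boundary of τ, the sum ξ·A lies in {-1,0,1}. -/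
/-! Antisymmetry makes `A` a gradient on a tree: `A (u, v) = φ v - φ u`, where `φ v` is the sum
of `A` along the path from a fixed root to `v`. Every edge sum therefore telescopes to a difference
of values of `φ`. As `A` vanishes off `τ`, `φ` is constant on each component of the complement of
`τ`, so the sum along a proper bi-infinite path equals the sum along a path in `τ` between the
boundary vertices through which its two tails leave `τ`. Conversely, a boundary path in `τ` extends
to a proper bi-infinite path by attaching a non-backtracking ray at each end: in a tree such a ray
is a geodesic, so once outside the subtree `τ` it never returns. -/

/-- A bi-infinite proper edge path in a graph. -/
def IsProperBiInfPath {V : Type*} (G : SimpleGraph V) (c : ℤ → V) : Prop :=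
  (∀ n : ℤ, G.Adj (c n) (c (n + 1))) ∧
    ∀ S : Finset V, ∃ N : ℕ, ∀ n : ℤ, (N : ℤ) ≤ |n| → c n ∉ S

open Filter Function SimpleGraph

theorem Int.sum_Ico_sub {β : Type*} [AddCommGroup β] (g : ℤ → β) {a b : ℤ} (hab : a ≤ b) :
    ∑ n ∈ Finset.Ico a b, (g (n + 1) - g n) = g b - g a := by
  induction b, hab using Int.leInduction with
  | base => simp
  | succ b hab ih => rw [← Finset.sum_Ico_add_eq_sum_Ico_add_one hab, ih]; abel

namespace SimpleGraph

variable {V : Type*} {G : SimpleGraph V}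

namespace Walk

def dartSum {β : Type*} [AddCommMonoid β] (A : V × V → β) {u v : V} (p : G.Walk u v) : β :=
  (p.darts.map fun d => A d.toProd).sum

@[simp]
lemma dartSum_concat {β : Type*} [AddCommMonoid β] (A : V × V → β) {u v w : V}
    (p : G.Walk u v) (h : G.Adj v w) : (p.concat h).dartSum A = p.dartSum A + A (v, w) := by
  simp [dartSum, darts_concat]

def ofSeq (r : ℕ → V) (hr : ∀ k, G.Adj (r k) (r (k + 1))) : (k : ℕ) → G.Walk (r 0) (r k)
  | 0 => nil
  | k + 1 => (ofSeq r hr k).concat (hr k)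

lemma support_ofSeq (r : ℕ → V) (hr : ∀ k, G.Adj (r k) (r (k + 1))) (k : ℕ) :
    (ofSeq r hr k).support = (List.range (k + 1)).map r := by
  induction k with
  | zero => rfl
  | succ k ih => rw [ofSeq, support_concat, ih, List.range_succ (n := k + 1), List.map_append]; rfl

end Walk

theorem IsTree.exists_potential {β : Type*} [AddCommGroup β] (hT : G.IsTree) (A : V × V → β)
    (hanti : ∀ u v, A (u, v) = -A (v, u)) :
    ∃ φ : V → β, ∀ u v, G.Adj u v → A (u, v) = φ v - φ u := by
  classical
  obtain ⟨r⟩ := hT.connected.nonempty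
  let path : ∀ v, G.Walk r v := fun v => (hT.connected r v).some.bypass
  have hpath : ∀ v, (path v).IsPath := fun v => Walk.bypass_isPath _
  refine ⟨fun v => (path v).dartSum A, fun u v h => ?_⟩
  show A (u, v) = (path v).dartSum A - (path u).dartSum A
  by_cases hv : v ∈ (path u).support
  · rw [hT.isAcyclic.path_concat (hpath v) (hpath u) h.symm hv, Walk.dartSum_concat, hanti]
    abel
  · have hu := hT.isAcyclic.mem_support_of_ne_mem_support_of_adj_of_isPath
      (hpath v) (hpath u) h.symm hv
    rw [hT.isAcyclic.path_concat (hpath u) (hpath v) h hu, Walk.dartSum_concat]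
    abel

theorem IsAcyclic.mem_of_mem_support_of_isPath (hG : G.IsAcyclic) {s : Set V}
    (hs : (G.induce s).Preconnected) {u v : V} {p : G.Walk u v} (hp : p.IsPath)
    (hu : u ∈ s) (hv : v ∈ s) {z : V} (hz : z ∈ p.support) : z ∈ s := by
  classical
  obtain ⟨q⟩ := hs ⟨u, hu⟩ ⟨v, hv⟩
  let q' : G.Walk u v := q.map (Embedding.induce s).toHom
  have hpq : p = q'.bypass := congrArg Subtype.val
    ((hG.subsingleton_path u v).elim ⟨p, hp⟩ ⟨q'.bypass, q'.bypass_isPath⟩)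
  rw [hpq] at hz
  obtain ⟨z', -, rfl⟩ := List.mem_map.1 (q.support_map _ ▸ q'.support_bypass_subset_support hz)
  exact z'.2

section NonBacktracking

variable {r : ℕ → V}

theorem IsAcyclic.isPath_ofSeq (hG : G.IsAcyclic) (hr : ∀ k, G.Adj (r k) (r (k + 1)))
    (hnb : ∀ k, r (k + 2) ≠ r k) (k : ℕ) : (Walk.ofSeq r hr k).IsPath := by
  induction k with
  | zero => exact .nil
  | succ k ih =>
    refine ih.concat (fun hmem => ?_) (hr k)
    cases k with
    | zero => exact (hr 0).ne' (by simpa [Walk.ofSeq] using hmem)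
    | succ j =>
      refine hnb j ((hG.eq_penultimate_of_adj_end ih (hr (j + 1)) hmem).trans ?_)
      exact Walk.penultimate_concat _ _

theorem IsAcyclic.injective_of_nonbacktracking (hG : G.IsAcyclic)
    (hr : ∀ k, G.Adj (r k) (r (k + 1))) (hnb : ∀ k, r (k + 2) ≠ r k) : Injective r := by
  intro i j hij
  have hnodup := (hG.isPath_ofSeq hr hnb (max i j)).support_nodup
  rw [Walk.support_ofSeq] at hnodup
  exact List.inj_on_of_nodup_map hnodup (by simp) (by simp) hij

theorem IsAcyclic.notMem_of_nonbacktracking (hG : G.IsAcyclic) (hr : ∀ k, G.Adj (r k) (r (k + 1)))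
    (hnb : ∀ k, r (k + 2) ≠ r k) {s : Set V} (hs : (G.induce s).Preconnected) (h0 : r 0 ∈ s)
    (h1 : r 1 ∉ s) {k : ℕ} (hk : 1 ≤ k) : r k ∉ s := fun hks =>
  h1 <| hG.mem_of_mem_support_of_isPath hs (hG.isPath_ofSeq hr hnb k) h0 hks <| by
    rw [Walk.support_ofSeq]
    exact List.mem_map_of_mem (List.mem_range.2 (by omega))

end NonBacktracking

theorem exists_nonbacktracking_seq [∀ v, Fintype (G.neighborSet v)]
    (hdeg : ∀ v, 2 ≤ G.degree v) {x y : V} (hxy : G.Adj x y) :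
    ∃ r : ℕ → V, r 0 = x ∧ r 1 = y ∧ (∀ k, G.Adj (r k) (r (k + 1))) ∧ ∀ k, r (k + 2) ≠ r k := by
  have hnext : ∀ v a, ∃ w, G.Adj v w ∧ w ≠ a := fun v a => by
    obtain ⟨w, hw, hwa⟩ :=
      (G.neighborFinset v).exists_mem_ne (by rw [card_neighborFinset_eq_degree]; exact hdeg v) a
    exact ⟨w, (G.mem_neighborFinset v w).1 hw, hwa⟩
  choose next hadj hne using hnext
  let step : V × V → V × V := fun e => (e.2, next e.2 e.1)
  have hstep : ∀ k, (step^[k + 1] (x, y)).1 = (step^[k] (x, y)).2 := fun k => by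
    rw [iterate_succ_apply']
  have hinv : ∀ k, G.Adj (step^[k] (x, y)).1 (step^[k] (x, y)).2 := by
    intro k
    induction k with
    | zero => exact hxy
    | succ k ih => rw [iterate_succ_apply']; exact hadj _ _
  refine ⟨fun k => (step^[k] (x, y)).1, rfl, rfl, fun k => ?_, fun k => ?_⟩
  · simpa only [hstep] using hinv k
  · simp only [hstep]
    rw [iterate_succ_apply']
    exact hne _ _

theorem IsAcyclic.exists_ray [∀ v, Fintype (G.neighborSet v)] (hG : G.IsAcyclic)
    (hdeg : ∀ v, 2 ≤ G.degree v) {s : Set V} (hs : (G.induce s).Preconnected) {x y : V}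
    (hxy : G.Adj x y) (hx : x ∈ s) (hy : y ∉ s) :
    ∃ r : ℕ → V, r 0 = x ∧ (∀ k, G.Adj (r k) (r (k + 1))) ∧ Tendsto r atTop cofinite ∧
      ∀ k, r k ∈ s → k = 0 := by
  obtain ⟨r, h0, h1, hr, hnb⟩ := exists_nonbacktracking_seq hdeg hxy
  refine ⟨r, h0, hr, ?_, fun k hk => ?_⟩
  · rw [← Nat.cofinite_eq_atTop]
    exact (hG.injective_of_nonbacktracking hr hnb).tendsto_cofinite
  · by_contra hk0
    exact hG.notMem_of_nonbacktracking hr hnb hs (h0 ▸ hx) (h1 ▸ hy) (by omega) hk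

theorem exists_adj_seq_append {ξ b : ℕ → V} {m : ℕ} (hξ : ∀ i < m, G.Adj (ξ i) (ξ (i + 1)))
    (hb : ∀ k, G.Adj (b k) (b (k + 1))) (hb0 : b 0 = ξ m) :
    ∃ d : ℕ → V, (∀ i, G.Adj (d i) (d (i + 1))) ∧ (∀ i ≤ m, d i = ξ i) ∧
      ∀ k, d (m + k) = b k := by
  let d : ℕ → V := fun i => if i ≤ m then ξ i else b (i - m)
  have hdξ : ∀ i ≤ m, d i = ξ i := fun i hi => if_pos hi
  have hdb : ∀ k, d (m + k) = b k := by
    rintro (_ | k)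
    · exact (hdξ m le_rfl).trans hb0.symm
    · exact (if_neg (by omega)).trans (by simp)
  refine ⟨d, fun i => ?_, hdξ, hdb⟩
  rcases lt_or_ge i m with hi | hi
  · rw [hdξ i hi.le, hdξ (i + 1) hi]
    exact hξ i hi
  · obtain ⟨k, rfl⟩ := Nat.exists_eq_add_of_le hi
    rw [hdb, add_assoc, hdb]
    exact hb k

theorem exists_adj_int_seq {a d : ℕ → V} (ha : ∀ k, G.Adj (a k) (a (k + 1)))
    (hd : ∀ k, G.Adj (d k) (d (k + 1))) (h0 : a 0 = d 0) :
    ∃ c : ℤ → V, (∀ n, G.Adj (c n) (c (n + 1))) ∧ (∀ k : ℕ, c (-k) = a k) ∧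
      ∀ k : ℕ, c k = d k := by
  let c : ℤ → V := fun n => if n < 0 then a n.natAbs else d n.natAbs
  have hca : ∀ k : ℕ, c (-k) = a k := by
    rintro (_ | k)
    · exact (if_neg (by simp)).trans h0.symm
    · exact (if_pos (by omega)).trans (congrArg a (by omega))
  have hcd : ∀ k : ℕ, c k = d k := fun k => (if_neg (by omega)).trans (by simp)
  refine ⟨c, fun n => ?_, hca, hcd⟩
  rcases n with k | k
  · simpa only [Int.ofNat_eq_natCast, ← Nat.cast_succ, hcd] using hd k
  · rw [Int.negSucc_eq, show -((k : ℤ) + 1) + 1 = -k by ring, ← Nat.cast_succ, hca, hca]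
    exact (ha k).symm

theorem isProperBiInfPath_of_tendsto {c : ℤ → V} (hc : ∀ n, G.Adj (c n) (c (n + 1)))
    (hneg : Tendsto (fun k : ℕ => c (-k)) atTop cofinite)
    (hpos : Tendsto (fun k : ℕ => c k) atTop cofinite) : IsProperBiInfPath G c := by
  refine ⟨hc, fun S => ?_⟩
  obtain ⟨N₁, h₁⟩ := eventually_atTop.1 (hneg.eventually S.eventually_cofinite_notMem)
  obtain ⟨N₂, h₂⟩ := eventually_atTop.1 (hpos.eventually S.eventually_cofinite_notMem)
  refine ⟨max N₁ N₂, fun n hn => ?_⟩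
  rw [Int.abs_eq_natAbs] at hn
  rcases Int.natAbs_eq n with h | h <;> rw [h]
  · exact h₂ _ (by omega)
  · exact h₁ _ (by omega)

theorem IsAcyclic.exists_isProperBiInfPath_extending [∀ v, Fintype (G.neighborSet v)]
    (hG : G.IsAcyclic) (hdeg : ∀ v, 2 ≤ G.degree v) {s : Set V} (hs : (G.induce s).Preconnected)
    {m : ℕ} {ξ : ℕ → V} (hξs : ∀ i ≤ m, ξ i ∈ s) (hξ : ∀ i < m, G.Adj (ξ i) (ξ (i + 1)))
    (h0 : ∃ w, w ∉ s ∧ G.Adj (ξ 0) w) (hm : ∃ w, w ∉ s ∧ G.Adj (ξ m) w) :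
    ∃ c : ℤ → V, IsProperBiInfPath G c ∧ (∀ i ≤ m, c i = ξ i) ∧
      ∀ n, c n ∈ s → 0 ≤ n ∧ n ≤ m := by
  obtain ⟨w₀, hw₀, hξw₀⟩ := h0
  obtain ⟨w₁, hw₁, hξw₁⟩ := hm
  obtain ⟨a, ha0, ha, hat, has⟩ := hG.exists_ray hdeg hs hξw₀ (hξs 0 (Nat.zero_le m)) hw₀
  obtain ⟨b, hb0, hb, hbt, hbs⟩ := hG.exists_ray hdeg hs hξw₁ (hξs m le_rfl) hw₁
  obtain ⟨d, hd, hdξ, hdb⟩ := exists_adj_seq_append hξ hb hb0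
  obtain ⟨c, hc, hca, hcd⟩ := exists_adj_int_seq ha hd (by rw [ha0, hdξ 0 (Nat.zero_le m)])
  refine ⟨c, isProperBiInfPath_of_tendsto hc ?_ ?_, fun i hi => by rw [hcd, hdξ i hi], ?_⟩
  · simpa only [hca] using hat
  · simp only [hcd]
    exact (tendsto_add_atTop_iff_nat m).1 (hbt.congr fun k => by rw [add_comm, hdb])
  · intro n hn
    by_contra hout
    rcases Int.natAbs_eq n with h | h <;> rw [h] at hn
    · obtain ⟨k, hk⟩ : ∃ k, n.natAbs = m + k := ⟨n.natAbs - m, by omega⟩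
      rw [hcd, hk, hdb] at hn
      have := hbs k hn
      omega
    · rw [hca] at hn
      have := has _ hn
      omega

theorem exists_boundary_eq_of_walk {β : Type*} {s : Set V} {φ : V → β}
    (hφ : ∀ u v, G.Adj u v → u ∉ s → φ v = φ u) {x t : V} (p : G.Walk x t) (ht : t ∈ s)
    (hx : x ∉ s) : ∃ b ∈ s, (∃ w, w ∉ s ∧ G.Adj b w) ∧ φ x = φ b := by
  induction p with
  | nil => exact absurd ht hx
  | @cons x y t hxy p ih =>
    have hφxy := hφ x y hxy hx
    by_cases hy : y ∈ s
    · exact ⟨y, hy, ⟨x, hx, hxy.symm⟩, hφxy.symm⟩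
    · obtain ⟨b, hb, hbw, hφb⟩ := ih ht hy
      exact ⟨b, hb, hbw, hφxy.symm.trans hφb⟩

section Potential

variable {β : Type*} [AddCommGroup β] {A : V × V → β} {φ : V → β}

theorem sum_range_eq_sub_of_potential (hφ : ∀ u v, G.Adj u v → A (u, v) = φ v - φ u)
    {ξ : ℕ → V} {m : ℕ} (hξ : ∀ i < m, G.Adj (ξ i) (ξ (i + 1))) :
    ∑ i ∈ Finset.range m, A (ξ i, ξ (i + 1)) = φ (ξ m) - φ (ξ 0) := by
  rw [Finset.sum_congr rfl fun i hi => hφ _ _ (hξ i (Finset.mem_range.1 hi))]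
  exact Finset.sum_range_sub (φ ∘ ξ) m

theorem finsum_eq_sub_of_potential (hφ : ∀ u v, G.Adj u v → A (u, v) = φ v - φ u)
    {c : ℤ → V} (hc : ∀ n, G.Adj (c n) (c (n + 1))) {a b : ℤ} (hab : a ≤ b)
    (hsupp : ∀ n, A (c n, c (n + 1)) ≠ 0 → a ≤ n ∧ n < b) :
    ∑ᶠ n, A (c n, c (n + 1)) = φ (c b) - φ (c a) := by
  rw [finsum_eq_sum_of_support_subset _ (s := Finset.Ico a b) fun n hn => by simpa using hsupp n hn,
    Finset.sum_congr rfl fun n _ => hφ _ _ (hc n)]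
  exact Int.sum_Ico_sub (φ ∘ c) hab

theorem exists_boundary_eq_of_potential (hG : G.Preconnected)
    (hφ : ∀ u v, G.Adj u v → A (u, v) = φ v - φ u) {s : Set V} (hA : ∀ u v, u ∉ s → A (u, v) = 0)
    {t x : V} (ht : t ∈ s) (hx : x ∉ s) : ∃ b ∈ s, (∃ w, w ∉ s ∧ G.Adj b w) ∧ φ x = φ b := by
  refine exists_boundary_eq_of_walk (fun u v h hu => ?_) (hG x t).some ht hx
  rw [← sub_eq_zero, ← hφ u v h, hA u v hu]

end Potential

end SimpleGraph

/-- Finiteness reduction for the embeddedness criterion: all bi-infinite proper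
paths have intersection number with `A` in `{-1,0,1}` iff all finite edge paths
in `τ` with endpoints on the boundary of `τ` do. -/
theorem embedded_criterion_finite_check {V : Type*} (G : SimpleGraph V)
    (hT : G.IsTree) [∀ v : V, Fintype (G.neighborSet v)]
    (hdeg : ∀ v : V, 2 ≤ G.degree v)
    (A : V × V → ℤ)
    (hanti : ∀ u v : V, A (u, v) = -A (v, u))
    (τ : Finset V) (hτconn : (G.induce (τ : Set V)).Connected)
    (hsupp : ∀ u v : V, A (u, v) ≠ 0 → G.Adj u v ∧ u ∈ τ ∧ v ∈ τ) :
    (∀ c : ℤ → V, IsProperBiInfPath G c →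
        (∑ᶠ n : ℤ, A (c n, c (n + 1))) ∈ ({-1, 0, 1} : Set ℤ)) ↔
    (∀ (m : ℕ) (ξ : ℕ → V),
        (∀ i ≤ m, ξ i ∈ τ) → (∀ i < m, G.Adj (ξ i) (ξ (i + 1))) →
        (∃ w, w ∉ τ ∧ G.Adj (ξ 0) w) → (∃ w, w ∉ τ ∧ G.Adj (ξ m) w) →
        (∑ i ∈ Finset.range m, A (ξ i, ξ (i + 1))) ∈ ({-1, 0, 1} : Set ℤ)) := by
  obtain ⟨φ, hφ⟩ := hT.exists_potential A hanti
  have hτ : ∀ {u v}, A (u, v) ≠ 0 → u ∈ τ ∧ v ∈ τ := fun h => (hsupp _ _ h).2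
  constructor
  · intro hbi m ξ hξτ hξ h0 hm
    obtain ⟨c, hc, hcξ, hcτ⟩ := hT.isAcyclic.exists_isProperBiInfPath_extending hdeg
      hτconn.preconnected hξτ hξ h0 hm
    have hsum := finsum_eq_sub_of_potential hφ hc.1 (Int.natCast_nonneg m) fun n hn =>
      ⟨(hcτ n (hτ hn).1).1, by have := (hcτ _ (hτ hn).2).2; omega⟩
    rw [sum_range_eq_sub_of_potential hφ hξ, ← hcξ 0 (Nat.zero_le m), ← hcξ m le_rfl,
      Nat.cast_zero, ← hsum]
    exact hbi c hc
  · rintro hfin c ⟨hc, hcproper⟩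
    obtain ⟨N, hN⟩ := hcproper τ
    have hcτ : ∀ n, c n ∈ τ → -(N : ℤ) ≤ n ∧ n < N := fun n hn =>
      (abs_lt.1 (not_le.1 fun h => hN n h hn)).imp_left le_of_lt
    rw [finsum_eq_sub_of_potential hφ hc (by omega) fun n hn => hcτ n (hτ hn).1]
    have hA : ∀ u v, u ∉ (τ : Set V) → A (u, v) = 0 := fun u v hu =>
      by_contra fun h => hu (hτ h).1
    obtain ⟨⟨t, ht⟩⟩ := hτconn.nonempty
    obtain ⟨b₀, hb₀, hb₀w, hφb₀⟩ := exists_boundary_eq_of_potential hT.connected.preconnected hφ hA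
      ht (hN (-N) (by simp))
    obtain ⟨b₁, hb₁, hb₁w, hφb₁⟩ := exists_boundary_eq_of_potential hT.connected.preconnected hφ hA
      ht (hN N (by simp))
    obtain ⟨p⟩ := hτconn.preconnected ⟨b₀, hb₀⟩ ⟨b₁, hb₁⟩
    have hp : ∀ i < p.length, G.Adj (p.getVert i) (p.getVert (i + 1)) :=
      fun i hi => p.adj_getVert_succ hi
    have := hfin p.length (fun i => p.getVert i) (fun i _ => (p.getVert i).2) hp
      (by simpa using hb₀w) (by simpa using hb₁w)
    rwa [sum_range_eq_sub_of_potential hφ hp, Walk.getVert_zero, Walk.getVert_length, ← hφb₀,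
      ← hφb₁] at this
end
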